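/- Under the saturated marginal structural model setup, assume λ₀ is strictly positive on a set of positive Lebesgue measure, and suppose m ≤ β(t) ≤ M for Lebesgue-a.e. t ∈ [0,τ]. Then every β* ∈ ℝ with h(β*) = 0 satisfies m ≤ β* ≤ M; i.e., the time-averaged log hazard ratio lies within the essential range bounds of the time-varying log hazard ratio. -/
import Mathlib


open MeasureTheory Filter

/-- Potential-outcome survival function `S_a(t) = exp(-∫₀ᵗ e^{β(u)·a} λ₀(u) du)`. -/
noncomputable def Ssurv (lam0 bet : ℝ → ℝ) (a t : ℝ) : ℝ :=
  Real.exp (-(∫ u in (0:ℝ)..t, Real.exp (bet u * a) * lam0 u))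

/-- Potential-outcome density `f_a(t) = e^{β(t)·a} λ₀(t) S_a(t)`. -/
noncomputable def fdens (lam0 bet : ℝ → ℝ) (a t : ℝ) : ℝ :=
  Real.exp (bet t * a) * lam0 t * Ssurv lam0 bet a t

/-- `ℰ(b,t) = e^b S₁(t) / (S₀(t) + e^b S₁(t))`. -/
noncomputable def Efun (lam0 bet : ℝ → ℝ) (b t : ℝ) : ℝ :=
  Real.exp b * Ssurv lam0 bet 1 t /
    (Ssurv lam0 bet 0 t + Real.exp b * Ssurv lam0 bet 1 t)

/-- Population full-data estimating function
`h(b) = ∫₀^τ (ℰ(β(t),t) - ℰ(b,t)) (f₀(t) + f₁(t)) dt`. -/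
noncomputable def hfun (τ : ℝ) (lam0 bet : ℝ → ℝ) (b : ℝ) : ℝ :=
  ∫ t in (0:ℝ)..τ,
    (Efun lam0 bet (bet t) t - Efun lam0 bet b t) *
      (fdens lam0 bet 0 t + fdens lam0 bet 1 t)

lemma Ssurv_pos (lam0 bet : ℝ → ℝ) (a t : ℝ) : 0 < Ssurv lam0 bet a t := Real.exp_pos _

lemma Ssurv_le_one (lam0 bet : ℝ → ℝ) (hl : ∀ u, 0 ≤ lam0 u) (a : ℝ) {t : ℝ} (ht : 0 ≤ t) :
    Ssurv lam0 bet a t ≤ 1 := by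
  rw [Ssurv, Real.exp_le_one_iff, neg_nonpos]
  exact intervalIntegral.integral_nonneg ht (fun u _ => mul_nonneg (Real.exp_pos _).le (hl u))

lemma Efun_pos (lam0 bet : ℝ → ℝ) (b t : ℝ) : 0 < Efun lam0 bet b t := by
  unfold Efun Ssurv; positivity

lemma Efun_lt_one (lam0 bet : ℝ → ℝ) (b t : ℝ) : Efun lam0 bet b t < 1 := by
  have h0 := Ssurv_pos lam0 bet 0 t
  have h1 := Ssurv_pos lam0 bet 1 t
  have he := Real.exp_pos b
  rw [Efun, div_lt_one (by positivity)]
  linarith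

lemma Efun_strictMono (lam0 bet : ℝ → ℝ) (t : ℝ) {b1 b2 : ℝ} (h : b1 < b2) :
    Efun lam0 bet b1 t < Efun lam0 bet b2 t := by
  have h0 := Ssurv_pos lam0 bet 0 t
  have h1 := Ssurv_pos lam0 bet 1 t
  have he1 := Real.exp_pos b1
  have he2 := Real.exp_pos b2
  have he : Real.exp b1 < Real.exp b2 := Real.exp_lt_exp.2 h
  have hd1 : 0 < Ssurv lam0 bet 0 t + Real.exp b1 * Ssurv lam0 bet 1 t :=
    add_pos h0 (mul_pos he1 h1)
  have hd2 : 0 < Ssurv lam0 bet 0 t + Real.exp b2 * Ssurv lam0 bet 1 t :=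
    add_pos h0 (mul_pos he2 h1)
  rw [Efun, Efun, div_lt_div_iff₀ hd1 hd2]
  nlinarith [mul_pos (mul_pos (sub_pos.2 he) h1) h0]

lemma fdens_nonneg (lam0 bet : ℝ → ℝ) (hl : ∀ u, 0 ≤ lam0 u) (a t : ℝ) :
    0 ≤ fdens lam0 bet a t := by
  unfold fdens
  have := Ssurv_pos lam0 bet a t
  have := hl t
  positivity

lemma Ssurv_aemeasurable (τ : ℝ) (lam0 bet : ℝ → ℝ) (a : ℝ)
    (hg : IntegrableOn (fun u => Real.exp (bet u * a) * lam0 u) (Set.Icc 0 τ)) :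
    AEMeasurable (Ssurv lam0 bet a) (volume.restrict (Set.Ioc 0 τ)) := by
  have hcont : ContinuousOn
      (fun t => Real.exp (-(∫ u in Set.Ioc 0 t, Real.exp (bet u * a) * lam0 u)))
      (Set.Icc 0 τ) :=
    Real.continuous_exp.comp_continuousOn
      (intervalIntegral.continuousOn_primitive hg).neg
  have h1 : AEMeasurable
      (fun t => Real.exp (-(∫ u in Set.Ioc 0 t, Real.exp (bet u * a) * lam0 u)))
      (volume.restrict (Set.Icc 0 τ)) :=
    hcont.aemeasurable measurableSet_Icc
  have h2 := h1.mono_measure (Measure.restrict_mono Set.Ioc_subset_Icc_self le_rfl)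
  refine h2.congr ?_
  filter_upwards [self_mem_ae_restrict measurableSet_Ioc] with t ht
  rw [Ssurv, intervalIntegral.integral_of_le ht.1.le]

/-- Key positivity lemma: the integral of a positive bounded factor against the
total density weight is positive. -/
lemma integral_weight_pos
    (τ : ℝ) (hτ : 0 < τ) (lam0 bet : ℝ → ℝ)
    (hlam_meas : Measurable lam0) (hbet_meas : Measurable bet)
    (hlam_nonneg : ∀ t, 0 ≤ lam0 t)
    (hlam_int : IntegrableOn lam0 (Set.Icc 0 τ))
    (hbetlam_int : IntegrableOn (fun t => Real.exp (bet t) * lam0 t) (Set.Icc 0 τ))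
    (hpos : 0 < volume {t | t ∈ Set.Icc 0 τ ∧ 0 < lam0 t})
    (φ : ℝ → ℝ)
    (hφm : AEMeasurable φ (volume.restrict (Set.Ioc 0 τ)))
    (hφpos : ∀ᵐ t ∂(volume.restrict (Set.Ioc (0:ℝ) τ)), 0 < φ t)
    (hφle : ∀ᵐ t ∂(volume.restrict (Set.Ioc (0:ℝ) τ)), φ t ≤ 1) :
    0 < ∫ t in (0:ℝ)..τ, φ t * (fdens lam0 bet 0 t + fdens lam0 bet 1 t) := by
  set μ := volume.restrict (Set.Ioc (0:ℝ) τ) with hμ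
  set w : ℝ → ℝ := fun t => fdens lam0 bet 0 t + fdens lam0 bet 1 t with hw
  have hg0 : IntegrableOn (fun u => Real.exp (bet u * 0) * lam0 u) (Set.Icc 0 τ) := by
    simpa using hlam_int
  have hg1 : IntegrableOn (fun u => Real.exp (bet u * 1) * lam0 u) (Set.Icc 0 τ) := by
    simpa using hbetlam_int
  have hS0 := Ssurv_aemeasurable τ lam0 bet 0 hg0
  have hS1 := Ssurv_aemeasurable τ lam0 bet 1 hg1
  have hw_nonneg : ∀ t, 0 ≤ w t := fun t =>
    add_nonneg (fdens_nonneg lam0 bet hlam_nonneg 0 t) (fdens_nonneg lam0 bet hlam_nonneg 1 t)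
  have hw_meas : AEMeasurable w μ := by
    have h0 : AEMeasurable (fun t => fdens lam0 bet 0 t) μ := by
      simp only [fdens]
      exact ((hbet_meas.mul_const 0).exp.mul hlam_meas).aemeasurable.mul hS0
    have h1 : AEMeasurable (fun t => fdens lam0 bet 1 t) μ := by
      simp only [fdens]
      exact ((hbet_meas.mul_const 1).exp.mul hlam_meas).aemeasurable.mul hS1
    exact h0.add h1
  -- integrability of the integrand
  have hG_int : Integrable (fun t => lam0 t + Real.exp (bet t) * lam0 t) μ :=
    (hlam_int.mono_set Set.Ioc_subset_Icc_self).add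
      (hbetlam_int.mono_set Set.Ioc_subset_Icc_self)
  have hw_le : ∀ t ∈ Set.Ioc (0:ℝ) τ, w t ≤ lam0 t + Real.exp (bet t) * lam0 t := by
    intro t ht
    have ht0 : (0:ℝ) ≤ t := ht.1.le
    have hb0 : fdens lam0 bet 0 t ≤ lam0 t := by
      rw [fdens]
      have h1 : Real.exp (bet t * 0) * lam0 t = lam0 t := by simp
      calc Real.exp (bet t * 0) * lam0 t * Ssurv lam0 bet 0 t
          ≤ Real.exp (bet t * 0) * lam0 t * 1 := by
            exact mul_le_mul_of_nonneg_left (Ssurv_le_one lam0 bet hlam_nonneg 0 ht0)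
              (mul_nonneg (Real.exp_pos _).le (hlam_nonneg t))
        _ = lam0 t := by simp
    have hb1 : fdens lam0 bet 1 t ≤ Real.exp (bet t) * lam0 t := by
      rw [fdens]
      calc Real.exp (bet t * 1) * lam0 t * Ssurv lam0 bet 1 t
          ≤ Real.exp (bet t * 1) * lam0 t * 1 := by
            exact mul_le_mul_of_nonneg_left (Ssurv_le_one lam0 bet hlam_nonneg 1 ht0)
              (mul_nonneg (Real.exp_pos _).le (hlam_nonneg t))
        _ = Real.exp (bet t) * lam0 t := by simp
    simp only [w]
    linarith
  have hF_int : Integrable (fun t => φ t * w t) μ := by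
    refine Integrable.mono' hG_int ((hφm.mul hw_meas).aestronglyMeasurable) ?_
    filter_upwards [hφpos, hφle, self_mem_ae_restrict measurableSet_Ioc] with t h1 h2 ht
    rw [Real.norm_eq_abs, abs_of_nonneg (mul_nonneg h1.le (hw_nonneg t))]
    calc φ t * w t ≤ 1 * w t := mul_le_mul_of_nonneg_right h2 (hw_nonneg t)
      _ = w t := one_mul _
      _ ≤ _ := hw_le t ht
  have hF_nonneg : 0 ≤ᵐ[μ] fun t => φ t * w t := by
    filter_upwards [hφpos] with t h1
    exact mul_nonneg h1.le (hw_nonneg t)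
  rw [intervalIntegral.integral_of_le hτ.le]
  rw [MeasureTheory.integral_pos_iff_support_of_nonneg_ae hF_nonneg hF_int]
  -- the set where lam0 is positive is a.e. contained in the support
  have hsub : {t | t ∈ Set.Icc 0 τ ∧ 0 < lam0 t} ≤ᵐ[μ] Function.support (fun t => φ t * w t) := by
    filter_upwards [hφpos] with t hφt ht
    have hwpos : 0 < w t := by
      have h0 : 0 < fdens lam0 bet 0 t := by
        rw [fdens]
        have := Ssurv_pos lam0 bet 0 t
        have := ht.2
        positivity
      exact lt_of_lt_of_le h0 (le_add_of_nonneg_right (fdens_nonneg lam0 bet hlam_nonneg 1 t))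
    exact ne_of_gt (mul_pos hφt hwpos)
  have hμs : 0 < μ {t | t ∈ Set.Icc 0 τ ∧ 0 < lam0 t} := by
    rw [hμ, Measure.restrict_apply' measurableSet_Ioc]
    have hsub2 : {t | t ∈ Set.Icc 0 τ ∧ 0 < lam0 t} ⊆
        ({t | t ∈ Set.Icc 0 τ ∧ 0 < lam0 t} ∩ Set.Ioc 0 τ) ∪ {(0:ℝ)} := by
      intro t ht
      rcases eq_or_ne t 0 with h | h
      · exact Or.inr (by simp [h])
      · exact Or.inl ⟨ht, ⟨lt_of_le_of_ne ht.1.1 (Ne.symm h), ht.1.2⟩⟩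
    have h3 := (measure_mono (μ := volume) hsub2).trans
      (measure_union_le (μ := volume) _ {(0:ℝ)})
    rw [Real.volume_singleton, add_zero] at h3
    exact lt_of_lt_of_le hpos h3
  exact lt_of_lt_of_le hμs (measure_mono_ae hsub)

/-- If `m ≤ β(t) ≤ M` for Lebesgue-a.e. `t ∈ [0,τ]` and `λ₀` is strictly positive on a set
of positive Lebesgue measure, then every root `β*` of `h` satisfies `m ≤ β* ≤ M`. -/
theorem beta_star_within_essential_range_bounds
    (τ : ℝ) (hτ : 0 < τ) (lam0 bet : ℝ → ℝ) (m M : ℝ)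
    (hlam_meas : Measurable lam0) (hbet_meas : Measurable bet)
    (hlam_nonneg : ∀ t, 0 ≤ lam0 t)
    (hlam_int : IntegrableOn lam0 (Set.Icc 0 τ))
    (hbetlam_int : IntegrableOn (fun t => Real.exp (bet t) * lam0 t) (Set.Icc 0 τ))
    (hpos : 0 < volume {t | t ∈ Set.Icc 0 τ ∧ 0 < lam0 t})
    (hbound : ∀ᵐ t ∂(volume.restrict (Set.Icc (0:ℝ) τ)), m ≤ bet t ∧ bet t ≤ M) :
    ∀ bstar : ℝ, hfun τ lam0 bet bstar = 0 → m ≤ bstar ∧ bstar ≤ M := by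
  intro bstar hroot
  have hbound' : ∀ᵐ t ∂(volume.restrict (Set.Ioc (0:ℝ) τ)), m ≤ bet t ∧ bet t ≤ M :=
    hbound.filter_mono (ae_mono (Measure.restrict_mono Set.Ioc_subset_Icc_self le_rfl))
  set μ := volume.restrict (Set.Ioc (0:ℝ) τ) with hμ
  have hg0 : IntegrableOn (fun u => Real.exp (bet u * 0) * lam0 u) (Set.Icc 0 τ) := by
    simpa using hlam_int
  have hg1 : IntegrableOn (fun u => Real.exp (bet u * 1) * lam0 u) (Set.Icc 0 τ) := by
    simpa using hbetlam_int
  have hS0 := Ssurv_aemeasurable τ lam0 bet 0 hg0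
  have hS1 := Ssurv_aemeasurable τ lam0 bet 1 hg1
  have hE_bet : AEMeasurable (fun t => Efun lam0 bet (bet t) t) μ := by
    simp only [Efun]
    exact (hbet_meas.exp.aemeasurable.mul hS1).div
      (hS0.add (hbet_meas.exp.aemeasurable.mul hS1))
  have hE_const : ∀ b : ℝ, AEMeasurable (fun t => Efun lam0 bet b t) μ := by
    intro b
    simp only [Efun]
    exact (aemeasurable_const.mul hS1).div (hS0.add (aemeasurable_const.mul hS1))
  constructor
  · by_contra hc
    push_neg at hc
    -- bstar < m : the integrand is positive
    set φ : ℝ → ℝ := fun t => Efun lam0 bet (bet t) t - Efun lam0 bet bstar t with hφ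
    have key : 0 < ∫ t in (0:ℝ)..τ, φ t * (fdens lam0 bet 0 t + fdens lam0 bet 1 t) := by
      refine integral_weight_pos τ hτ lam0 bet hlam_meas hbet_meas hlam_nonneg hlam_int
        hbetlam_int hpos φ (hE_bet.sub (hE_const bstar)) ?_ ?_
      · filter_upwards [hbound'] with t ht
        have : bstar < bet t := lt_of_lt_of_le hc ht.1
        exact sub_pos.2 (Efun_strictMono lam0 bet t this)
      · refine Eventually.of_forall fun t => ?_
        have h1 := Efun_lt_one lam0 bet (bet t) t
        have h2 := Efun_pos lam0 bet bstar t
        simp only [φ]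
        linarith
    have : hfun τ lam0 bet bstar =
        ∫ t in (0:ℝ)..τ, φ t * (fdens lam0 bet 0 t + fdens lam0 bet 1 t) := rfl
    rw [hroot] at this
    linarith [this ▸ key]
  · by_contra hc
    push_neg at hc
    -- M < bstar : the integrand is negative
    set φ : ℝ → ℝ := fun t => Efun lam0 bet bstar t - Efun lam0 bet (bet t) t with hφ
    have key : 0 < ∫ t in (0:ℝ)..τ, φ t * (fdens lam0 bet 0 t + fdens lam0 bet 1 t) := by
      refine integral_weight_pos τ hτ lam0 bet hlam_meas hbet_meas hlam_nonneg hlam_int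
        hbetlam_int hpos φ ((hE_const bstar).sub hE_bet) ?_ ?_
      · filter_upwards [hbound'] with t ht
        have : bet t < bstar := lt_of_le_of_lt ht.2 hc
        exact sub_pos.2 (Efun_strictMono lam0 bet t this)
      · refine Eventually.of_forall fun t => ?_
        have h1 := Efun_lt_one lam0 bet bstar t
        have h2 := Efun_pos lam0 bet (bet t) t
        simp only [φ]
        linarith
    have heq : hfun τ lam0 bet bstar =
        -∫ t in (0:ℝ)..τ, φ t * (fdens lam0 bet 0 t + fdens lam0 bet 1 t) := by
      rw [← intervalIntegral.integral_neg]
      unfold hfun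
      congr 1
      funext t
      simp only [φ]
      ring
    rw [hroot] at heq
    linarith
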